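/- arXiv:1104.2282 — 3 statements merged into one kernel-verified Lean document; each statement's English description precedes it below -/
import Mathlib

section
/- Let A be an n×n matrix over a commutative ring. For 1 ≤ k ≤ n−1 and indices i, j with k < i, j ≤ n, the following (Sylvester/bordered determinant) identity holds: p_{k-1}(A) · m_k(i,j) = m_{k-1}(k,k) · m_{k-1}(i,j) − m_{k-1}(i,k) · m_{k-1}(k,j). -/
/-- The leading principal minor of order `k` of an `n × n` matrix `A`:
the determinant of the submatrix on (1-indexed) rows `1,…,k` and columns `1,…,k`. -/
def pminor {R : Type*} [CommRing R] {n : ℕ} (A : Matrix (Fin n) (Fin n) R)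
    (k : ℕ) (h : k ≤ n) : R :=
  (A.submatrix (Fin.castLE h) (Fin.castLE h)).det

/-- Index map selecting (0-indexed) rows `0,…,k-1` followed by `i`. -/
def bIdx {n : ℕ} (k : ℕ) (h : k ≤ n) (i : Fin n) : Fin (k + 1) → Fin n :=
  fun r => if hr : (r : ℕ) < k then ⟨r, lt_of_lt_of_le hr h⟩ else i

/-- The bordered minor `m_k(i,j)` of `A`: the determinant of the `(k+1) × (k+1)`
submatrix of `A` on (1-indexed) rows `1,…,k,i` and columns `1,…,k,j`. -/
def bminor {R : Type*} [CommRing R] {n : ℕ} (A : Matrix (Fin n) (Fin n) R)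
    (k : ℕ) (h : k ≤ n) (i j : Fin n) : R :=
  (A.submatrix (bIdx k h i) (bIdx k h j)).det

/-!
Write the `(k+1) × (k+1)` matrix in block form `[E F; G H]` with `E` the leading `(k-1)`-block
and `H` of size `2 × 2`. When `E` is invertible, the Schur complement `S = H - G E⁻¹ F` gives
`det M = det E · det S` for the whole matrix and `det E · S p q` for each of the four bordered
minors, and the identity is `det S = S₀₀ S₁₁ - S₁₀ S₀₁` multiplied by `(det E)²`. In general the
identity is polynomial in the entries, so it follows from the case of the generic matrix over
`ℤ[X_pq]`, whose leading block has nonzero determinant and hence is invertible over the fraction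
field.
-/

namespace Matrix

variable {R : Type*} [CommRing R] {ι : Type*} [Fintype ι] [DecidableEq ι]

def borderedDet {α β : Type*} (A : Matrix α β R) (r : ι → α) (c : ι → β) (i : α) (j : β) : R :=
  (A.submatrix (Sum.elim r fun _ : Fin 1 => i) (Sum.elim c fun _ : Fin 1 => j)).det

theorem borderedDet_submatrix {α β γ δ : Type*} (A : Matrix γ δ R) (f : α → γ) (g : β → δ)
    (r : ι → α) (c : ι → β) (i : α) (j : β) :
    (A.submatrix f g).borderedDet r c i j = A.borderedDet (f ∘ r) (g ∘ c) (f i) (g j) := by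
  simp only [borderedDet, submatrix_submatrix, Sum.comp_elim]
  rfl

theorem _root_.RingHom.map_borderedDet {S α β : Type*} [CommRing S] (f : R →+* S)
    (A : Matrix α β R) (r : ι → α) (c : ι → β) (i : α) (j : β) :
    f (A.borderedDet r c i j) = (A.map f).borderedDet r c i j := by
  rw [borderedDet, f.map_det, RingHom.mapMatrix_apply, ← submatrix_map, borderedDet]

theorem borderedDet_eq_det_mul_schur {κ : Type*} (M : Matrix (ι ⊕ κ) (ι ⊕ κ) R)
    [Invertible M.toBlocks₁₁] (p q : κ) :
    M.borderedDet Sum.inl Sum.inl (Sum.inr p) (Sum.inr q) = M.toBlocks₁₁.det *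
      (M.toBlocks₂₂ - M.toBlocks₂₁ * ⅟M.toBlocks₁₁ * M.toBlocks₁₂) p q := by
  have hblocks : M.submatrix (Sum.elim Sum.inl fun _ : Fin 1 => Sum.inr p)
      (Sum.elim Sum.inl fun _ : Fin 1 => Sum.inr q) =
      fromBlocks M.toBlocks₁₁ (M.toBlocks₁₂.submatrix id fun _ => q)
        (M.toBlocks₂₁.submatrix (fun _ => p) id)
        (M.toBlocks₂₂.submatrix (fun _ => p) fun _ => q) := by
    ext (a | a) (b | b) <;> rfl
  rw [borderedDet, hblocks, det_fromBlocks₁₁, det_fin_one]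
  simp [mul_apply]

theorem det_mul_det_toBlocks₁₁_of_invertible (M : Matrix (ι ⊕ Fin 2) (ι ⊕ Fin 2) R)
    [Invertible M.toBlocks₁₁] :
    M.det * M.toBlocks₁₁.det =
      M.borderedDet Sum.inl Sum.inl (Sum.inr 0) (Sum.inr 0) *
          M.borderedDet Sum.inl Sum.inl (Sum.inr 1) (Sum.inr 1) -
        M.borderedDet Sum.inl Sum.inl (Sum.inr 1) (Sum.inr 0) *
          M.borderedDet Sum.inl Sum.inl (Sum.inr 0) (Sum.inr 1) := by
  conv_lhs => arg 1; rw [← fromBlocks_toBlocks M, det_fromBlocks₁₁, det_fin_two]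
  simp only [borderedDet_eq_det_mul_schur]
  ring

theorem det_mvPolynomialX_submatrix_ne_zero {m : Type*} [Fintype m] [DecidableEq m]
    (S : Type*) [CommRing S] [Nontrivial S] {e : ι → m} (he : Function.Injective e) :
    ((mvPolynomialX m m S).submatrix e e).det ≠ 0 := by
  intro h
  have := congrArg (MvPolynomial.eval fun p : m × m => (1 : Matrix m m S) p.1 p.2) h
  rw [RingHom.map_det, RingHom.mapMatrix_apply, ← submatrix_map, ← RingHom.mapMatrix_apply,
    mvPolynomialX_mapMatrix_eval, submatrix_one _ he, det_one, map_zero] at this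
  exact one_ne_zero this

theorem det_mul_det_submatrix_inl (M : Matrix (ι ⊕ Fin 2) (ι ⊕ Fin 2) R) :
    M.det * (M.submatrix Sum.inl Sum.inl).det =
      M.borderedDet Sum.inl Sum.inl (Sum.inr 0) (Sum.inr 0) *
          M.borderedDet Sum.inl Sum.inl (Sum.inr 1) (Sum.inr 1) -
        M.borderedDet Sum.inl Sum.inl (Sum.inr 1) (Sum.inr 0) *
          M.borderedDet Sum.inl Sum.inl (Sum.inr 0) (Sum.inr 1) := by
  let S := MvPolynomial ((ι ⊕ Fin 2) × (ι ⊕ Fin 2)) ℤ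
  let X := mvPolynomialX (ι ⊕ Fin 2) (ι ⊕ Fin 2) ℤ
  suffices hX : X.det * (X.submatrix Sum.inl Sum.inl).det =
      X.borderedDet Sum.inl Sum.inl (Sum.inr 0) (Sum.inr 0) *
          X.borderedDet Sum.inl Sum.inl (Sum.inr 1) (Sum.inr 1) -
        X.borderedDet Sum.inl Sum.inl (Sum.inr 1) (Sum.inr 0) *
          X.borderedDet Sum.inl Sum.inl (Sum.inr 0) (Sum.inr 1) by
    simpa only [map_sub, map_mul, RingHom.map_borderedDet, RingHom.map_det,
      RingHom.mapMatrix_apply, ← submatrix_map, MvPolynomial.coe_eval₂Hom, X,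
      mvPolynomialX_map_eval₂] using congrArg
        (MvPolynomial.eval₂Hom (Int.castRingHom R) fun p : (ι ⊕ Fin 2) × (ι ⊕ Fin 2) => M p.1 p.2)
        hX
  let K := FractionRing S
  apply IsFractionRing.injective S K
  simp only [map_sub, map_mul, RingHom.map_borderedDet, RingHom.map_det,
    RingHom.mapMatrix_apply, ← submatrix_map]
  have : Invertible (X.map (algebraMap S K)).toBlocks₁₁ := by
    refine invertibleOfIsUnitDet _ (isUnit_iff_ne_zero.mpr ?_)
    change ((X.submatrix Sum.inl Sum.inl).map (algebraMap S K)).det ≠ 0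
    rw [← RingHom.mapMatrix_apply, ← RingHom.map_det]
    exact (map_ne_zero_iff _ (IsFractionRing.injective S K)).mpr
      (det_mvPolynomialX_submatrix_ne_zero ℤ Sum.inl_injective)
  exact det_mul_det_toBlocks₁₁_of_invertible _

theorem det_submatrix_sumElim_mul_det_submatrix {α β : Type*} (A : Matrix α β R)
    (r : ι → α) (c : ι → β) (u : Fin 2 → α) (v : Fin 2 → β) :
    (A.submatrix (Sum.elim r u) (Sum.elim c v)).det * (A.submatrix r c).det =
      A.borderedDet r c (u 0) (v 0) * A.borderedDet r c (u 1) (v 1) -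
        A.borderedDet r c (u 1) (v 0) * A.borderedDet r c (u 0) (v 1) := by
  simpa only [submatrix_submatrix, borderedDet_submatrix, Sum.elim_comp_inl, Sum.elim_inr]
    using det_mul_det_submatrix_inl (A.submatrix (Sum.elim r u) (Sum.elim c v))

end Matrix

section

variable {R : Type*} [CommRing R] {n : ℕ}

theorem bminor_eq_borderedDet (A : Matrix (Fin n) (Fin n) R) (k : ℕ) (h : k ≤ n) (i j : Fin n) :
    bminor A k h i j = A.borderedDet (Fin.castLE h) (Fin.castLE h) i j := by
  have hidx : ∀ x : Fin n, bIdx k h x ∘ finSumFinEquiv = Sum.elim (Fin.castLE h) fun _ => x := by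
    intro x
    ext (a | a) <;> simp [bIdx]
  rw [bminor, ← Matrix.det_submatrix_equiv_self finSumFinEquiv, Matrix.submatrix_submatrix,
    hidx, hidx, Matrix.borderedDet]

theorem bminor_succ_eq_det (A : Matrix (Fin n) (Fin n) R) (k : ℕ) (h : k < n) (i j : Fin n) :
    bminor A (k + 1) h i j =
      (A.submatrix (Sum.elim (Fin.castLE h.le) ![⟨k, h⟩, i])
        (Sum.elim (Fin.castLE h.le) ![⟨k, h⟩, j])).det := by
  have hidx : ∀ x : Fin n, bIdx (k + 1) h x ∘ finSumFinEquiv (m := k) (n := 2) =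
      Sum.elim (Fin.castLE h.le) ![⟨k, h⟩, x] := by
    intro x
    ext (a | a)
    · simp [bIdx]
    · fin_cases a <;> simp [bIdx]
  rw [bminor, ← Matrix.det_submatrix_equiv_self (finSumFinEquiv (m := k) (n := 2)),
    Matrix.submatrix_submatrix, hidx, hidx]

end

/-- Sylvester/bordered determinant identity: for `1 ≤ k ≤ n-1` and (1-indexed)
indices `i, j` with `k < i, j ≤ n` (so 0-indexed `k ≤ i, j`),
`p_{k-1}(A) * m_k(i,j) = m_{k-1}(k,k) * m_{k-1}(i,j) - m_{k-1}(i,k) * m_{k-1}(k,j)`. -/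
theorem stmt0 {R : Type*} [CommRing R] {n : ℕ} (A : Matrix (Fin n) (Fin n) R)
    (k : ℕ) (hk1 : 1 ≤ k) (hkn : k < n)
    (i j : Fin n) :
    pminor A (k - 1) (by omega) * bminor A k hkn.le i j =
      bminor A (k - 1) (by omega) ⟨k - 1, by omega⟩ ⟨k - 1, by omega⟩ *
          bminor A (k - 1) (by omega) i j -
        bminor A (k - 1) (by omega) i ⟨k - 1, by omega⟩ *
          bminor A (k - 1) (by omega) ⟨k - 1, by omega⟩ j := by
  obtain ⟨m, rfl⟩ : ∃ m, k = m + 1 := ⟨k - 1, by omega⟩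
  have := Matrix.det_submatrix_sumElim_mul_det_submatrix A (Fin.castLE (by omega : m ≤ n))
    (Fin.castLE (by omega : m ≤ n)) ![⟨m, by omega⟩, i] ![⟨m, by omega⟩, j]
  simp only [Matrix.cons_val_zero, Matrix.cons_val_one] at this
  rw [mul_comm, pminor, bminor_succ_eq_det A m (by omega)]
  simp only [bminor_eq_borderedDet]
  exact this
end

section
/- Chiò condensation: let n ≥ 2 and let A be an n×n matrix over a commutative ring. Define the (n−1)×(n−1) matrix B by B_{i,j} = A_{1,1}·A_{i+1,j+1} − A_{i+1,1}·A_{1,j+1} for 1 ≤ i, j ≤ n−1. Then det B = A_{1,1}^{n−2} · det A. -/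
/-!
Subtracting `A (i+1) 0` times row `0` from `A 0 0` times row `i+1` clears the first column below
the pivot and scales the determinant by `A 0 0 ^ (n - 1)`; the remaining block is the condensed
matrix, so `A 0 0 * det B = A 0 0 ^ (n - 1) * det A`. Cancelling the pivot is legitimate for the
generic matrix over the domain `ℤ[X i j]`, and the identity specializes to every commutative ring.
-/

open Matrix

namespace Matrix

variable {R S : Type*} [CommRing R] [CommRing S] {m : ℕ}

def chioCondensation (A : Matrix (Fin (m + 2)) (Fin (m + 2)) R) :
    Matrix (Fin (m + 1)) (Fin (m + 1)) R :=
  of fun i j => A 0 0 * A i.succ j.succ - A i.succ 0 * A 0 j.succ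

def pivotElimination (A : Matrix (Fin (m + 2)) (Fin (m + 2)) R) :
    Matrix (Fin (m + 2)) (Fin (m + 2)) R :=
  of fun i j => if i = 0 then A 0 j else A 0 0 * A i j - A i 0 * A 0 j

theorem det_pivotElimination (A : Matrix (Fin (m + 2)) (Fin (m + 2)) R) :
    (pivotElimination A).det = A 0 0 ^ (m + 1) * A.det := by
  have scaled : (of fun i j => (if i = 0 then 1 else A 0 0) * A i j).det =
      A 0 0 ^ (m + 1) * A.det := by
    rw [det_mul_column, Fin.prod_univ_succ]
    simp [Fin.succ_ne_zero]
  rw [← scaled]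
  refine det_eq_of_forall_row_eq_smul_add_const (fun i => if i = 0 then 0 else -A i 0) 0
    (by simp) fun i j => ?_
  by_cases hi : i = 0 <;> simp [pivotElimination, hi]
  ring

theorem det_pivotElimination_eq_mul_det_chioCondensation
    (A : Matrix (Fin (m + 2)) (Fin (m + 2)) R) :
    (pivotElimination A).det = A 0 0 * (chioCondensation A).det := by
  have column_zero : ∀ i : Fin (m + 1), pivotElimination A i.succ 0 = 0 := fun i => by
    simp [pivotElimination, Fin.succ_ne_zero, mul_comm]
  have minor : (pivotElimination A).submatrix (Fin.succAbove 0) Fin.succ =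
      chioCondensation A := by
    ext i j
    simp [pivotElimination, chioCondensation, Fin.succ_ne_zero]
  rw [det_succ_column_zero, Fin.sum_univ_succ]
  simp only [column_zero, mul_zero, zero_mul, Finset.sum_const_zero, add_zero, minor]
  simp [pivotElimination]

theorem mul_det_chioCondensation (A : Matrix (Fin (m + 2)) (Fin (m + 2)) R) :
    A 0 0 * (chioCondensation A).det = A 0 0 ^ (m + 1) * A.det := by
  rw [← det_pivotElimination_eq_mul_det_chioCondensation, det_pivotElimination]

theorem chioCondensation_map (A : Matrix (Fin (m + 2)) (Fin (m + 2)) R) (f : R →+* S) :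
    f.mapMatrix (chioCondensation A) = chioCondensation (f.mapMatrix A) := by
  ext i j
  simp [chioCondensation]

theorem det_chioCondensation_mvPolynomialX :
    (chioCondensation (mvPolynomialX (Fin (m + 2)) (Fin (m + 2)) ℤ)).det =
      mvPolynomialX (Fin (m + 2)) (Fin (m + 2)) ℤ 0 0 ^ m *
        (mvPolynomialX (Fin (m + 2)) (Fin (m + 2)) ℤ).det := by
  refine mul_left_cancel₀ (MvPolynomial.X_ne_zero (0, 0)) ?_
  rw [← mvPolynomialX_apply, mul_det_chioCondensation]
  ring

theorem det_chioCondensation (A : Matrix (Fin (m + 2)) (Fin (m + 2)) R) :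
    (chioCondensation A).det = A 0 0 ^ m * A.det := by
  let f := (MvPolynomial.aeval (R := ℤ) fun p : Fin (m + 2) × Fin (m + 2) => A p.1 p.2).toRingHom
  have generic_eval : f.mapMatrix (mvPolynomialX (Fin (m + 2)) (Fin (m + 2)) ℤ) = A :=
    mvPolynomialX_mapMatrix_aeval ℤ A
  have pivot_eval : f (mvPolynomialX (Fin (m + 2)) (Fin (m + 2)) ℤ 0 0) = A 0 0 :=
    congrFun (congrFun generic_eval 0) 0
  have := congrArg f det_chioCondensation_mvPolynomialX
  rwa [map_mul, map_pow, f.map_det, f.map_det, chioCondensation_map, generic_eval,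
    pivot_eval] at this

end Matrix

/-- Chiò condensation: for `n ≥ 2` and an `n × n` matrix `A` over a commutative ring,
if `B` is the `(n-1) × (n-1)` matrix with
`B i j = A_{1,1} * A_{i+1,j+1} - A_{i+1,1} * A_{1,j+1}` (1-indexed),
then `det B = A_{1,1} ^ (n-2) * det A`. -/
theorem stmt1 {R : Type*} [CommRing R] {n : ℕ} (hn : 2 ≤ n)
    (A : Matrix (Fin n) (Fin n) R)
    (B : Matrix (Fin (n - 1)) (Fin (n - 1)) R)
    (hB : ∀ i j : Fin (n - 1),
      B i j = A ⟨0, by omega⟩ ⟨0, by omega⟩ *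
            A ⟨(i : ℕ) + 1, by have := i.isLt; omega⟩ ⟨(j : ℕ) + 1, by have := j.isLt; omega⟩ -
          A ⟨(i : ℕ) + 1, by have := i.isLt; omega⟩ ⟨0, by omega⟩ *
            A ⟨0, by omega⟩ ⟨(j : ℕ) + 1, by have := j.isLt; omega⟩) :
    B.det = A ⟨0, by omega⟩ ⟨0, by omega⟩ ^ (n - 2) * A.det := by
  obtain ⟨m, rfl⟩ : ∃ m, n = m + 2 := ⟨n - 2, by omega⟩
  have hB_eq : B = chioCondensation A := by
    ext i j
    exact hB i j
  rw [hB_eq, det_chioCondensation]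
  rfl
end

section
/- Bareiss (Chiò) fraction-free elimination computes bordered minors: let F be a field and A an n×n matrix over F whose leading principal minors p_1(A),…,p_{n−1}(A) are all nonzero. Define tableaux α^{(k)} recursively by α^{(1)}_{i,j} = A_{i,j} for all i,j, and for 1 ≤ k ≤ n−1 and i, j > k, α^{(k+1)}_{i,j} = (α^{(k)}_{k,k} · α^{(k)}_{i,j} − α^{(k)}_{i,k} · α^{(k)}_{k,j}) / α^{(k−1)}_{k−1,k−1}, where the divisor is taken to be 1 when k = 1. Then for every 1 ≤ k ≤ n and all i, j ≥ k, one has α^{(k)}_{i,j} = m_{k−1}(i,j), the determinant of the k×k submatrix of A on rows 1,…,k−1,i and columns 1,…,k−1,j. -/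
namespace Matrix

lemma submatrix_sumElim {α ι ι' m m' κ κ' : Type*} (A : Matrix ι ι' α)
    (f : m → ι) (r : κ → ι) (g : m' → ι') (c : κ' → ι') :
    A.submatrix (Sum.elim f r) (Sum.elim g c) =
      fromBlocks (A.submatrix f g) (A.submatrix f c) (A.submatrix r g) (A.submatrix r c) := by
  ext (_ | _) (_ | _) <;> rfl

variable {R : Type*} [CommRing R] {ι ι' m : Type*} [Fintype m] [DecidableEq m]
  (A : Matrix ι ι' R) (f : m → ι) (g : m → ι')

noncomputable def borderedSchurComplement [Invertible (A.submatrix f g)] {κ : Type*}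
    (r : κ → ι) (c : κ → ι') : Matrix κ κ R :=
  A.submatrix r c - A.submatrix r g * ⅟(A.submatrix f g) * A.submatrix f c

lemma det_submatrix_sumElim_fin_one [Invertible (A.submatrix f g)] {κ : Type*} (r : κ → ι)
    (c : κ → ι') (a b : κ) :
    (A.submatrix (Sum.elim f fun _ : Fin 1 => r a) (Sum.elim g fun _ : Fin 1 => c b)).det =
      (A.submatrix f g).det * borderedSchurComplement A f g r c a b := by
  rw [submatrix_sumElim, det_fromBlocks₁₁, det_fin_one]
  simp [borderedSchurComplement, mul_apply]

/-- Sylvester's determinant identity for a block bordered by two rows and two columns. -/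
lemma det_submatrix_sumElim_fin_two_mul_det (hB : IsUnit (A.submatrix f g).det)
    (r : Fin 2 → ι) (c : Fin 2 → ι') :
    (A.submatrix (Sum.elim f r) (Sum.elim g c)).det * (A.submatrix f g).det =
      (A.submatrix (Sum.elim f fun _ : Fin 1 => r 0) (Sum.elim g fun _ : Fin 1 => c 0)).det *
          (A.submatrix (Sum.elim f fun _ : Fin 1 => r 1) (Sum.elim g fun _ : Fin 1 => c 1)).det -
        (A.submatrix (Sum.elim f fun _ : Fin 1 => r 1) (Sum.elim g fun _ : Fin 1 => c 0)).det *
          (A.submatrix (Sum.elim f fun _ : Fin 1 => r 0) (Sum.elim g fun _ : Fin 1 => c 1)).det := by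
  have := (A.submatrix f g).invertibleOfIsUnitDet hB
  simp only [det_submatrix_sumElim_fin_one A f g r c]
  rw [submatrix_sumElim, det_fromBlocks₁₁, det_fin_two]
  simp only [borderedSchurComplement]
  ring

end Matrix

open Matrix

section BorderedMinors

variable {R : Type*} [CommRing R] {n : ℕ} (A : Matrix (Fin n) (Fin n) R)

lemma pminor_zero : pminor A 0 (Nat.zero_le n) = 1 := det_fin_zero

lemma bminor_zero (i j : Fin n) : bminor A 0 (Nat.zero_le n) i j = A i j := by
  simp [bminor, bIdx]

lemma bIdx_self (m : ℕ) (h : m + 1 ≤ n) :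
    bIdx m (Nat.le_of_succ_le h) ⟨m, h⟩ = Fin.castLE h := by
  ext r
  simp only [bIdx]
  split_ifs with hr
  · rfl
  · simp only [Fin.val_castLE]
    omega

lemma pminor_succ (m : ℕ) (h : m + 1 ≤ n) :
    pminor A (m + 1) h = bminor A m (Nat.le_of_succ_le h) ⟨m, h⟩ ⟨m, h⟩ := by
  rw [pminor, bminor, bIdx_self]

lemma bIdx_comp_finSumFinEquiv (k : ℕ) (h : k ≤ n) (i : Fin n) :
    bIdx k h i ∘ finSumFinEquiv = Sum.elim (Fin.castLE h) fun _ : Fin 1 => i := by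
  ext (r | r) <;> simp [bIdx]

lemma bIdx_succ_comp_finSumFinEquiv (m : ℕ) (h : m + 1 ≤ n) (i : Fin n) :
    bIdx (m + 1) h i ∘ (finSumFinEquiv : Fin m ⊕ Fin 2 ≃ Fin (m + 2)) =
      Sum.elim (Fin.castLE (Nat.le_of_succ_le h) : Fin m → Fin n) ![⟨m, h⟩, i] := by
  ext (r | r)
  · simp [bIdx]
  · fin_cases r <;> simp [bIdx]

lemma bminor_eq_det_submatrix_sumElim (k : ℕ) (h : k ≤ n) (i j : Fin n) :
    bminor A k h i j =
      (A.submatrix (Sum.elim (Fin.castLE h) fun _ : Fin 1 => i)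
        (Sum.elim (Fin.castLE h) fun _ : Fin 1 => j)).det := by
  rw [bminor, ← det_submatrix_equiv_self finSumFinEquiv, submatrix_submatrix,
    bIdx_comp_finSumFinEquiv, bIdx_comp_finSumFinEquiv]

lemma bminor_succ_eq_det_submatrix_sumElim (m : ℕ) (h : m + 1 ≤ n) (i j : Fin n) :
    bminor A (m + 1) h i j =
      (A.submatrix (Sum.elim (Fin.castLE (Nat.le_of_succ_le h) : Fin m → Fin n) ![⟨m, h⟩, i])
        (Sum.elim (Fin.castLE (Nat.le_of_succ_le h) : Fin m → Fin n) ![⟨m, h⟩, j])).det := by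
  rw [bminor, ← det_submatrix_equiv_self (finSumFinEquiv : Fin m ⊕ Fin 2 ≃ Fin (m + 2)),
    submatrix_submatrix, bIdx_succ_comp_finSumFinEquiv, bIdx_succ_comp_finSumFinEquiv]

lemma bminor_succ_mul_pminor (m : ℕ) (h : m + 1 ≤ n)
    (hp : IsUnit (pminor A m (Nat.le_of_succ_le h))) (i j : Fin n) :
    bminor A (m + 1) h i j * pminor A m (Nat.le_of_succ_le h) =
      bminor A m (by omega) ⟨m, h⟩ ⟨m, h⟩ * bminor A m (by omega) i j -
        bminor A m (by omega) i ⟨m, h⟩ * bminor A m (by omega) ⟨m, h⟩ j := by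
  rw [bminor_succ_eq_det_submatrix_sumElim, pminor]
  simpa only [bminor_eq_det_submatrix_sumElim, cons_val_zero, cons_val_one] using
    det_submatrix_sumElim_fin_two_mul_det A _ _ hp ![⟨m, h⟩, i] ![⟨m, h⟩, j]

end BorderedMinors

/-- Bareiss (Chiò) fraction-free elimination computes bordered minors: if the
leading principal minors `p_1(A), …, p_{n-1}(A)` are nonzero and the tableaux
`α^{(k)}` satisfy the Bareiss recursion (all indices 1-indexed, so a 1-indexed
index `i` is the 0-indexed `i - 1`), then `α^{(k)}_{i,j} = m_{k-1}(i,j)` for all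
`1 ≤ k ≤ n` and `i, j ≥ k`. -/
theorem stmt3 {F : Type*} [Field F] {n : ℕ} (A : Matrix (Fin n) (Fin n) F)
    (hp : ∀ k (_ : 1 ≤ k) (_ : k ≤ n - 1), pminor A k (by omega) ≠ 0)
    (α : ℕ → Fin n → Fin n → F)
    (hinit : ∀ i j, α 1 i j = A i j)
    (hrec : ∀ k (hk1 : 1 ≤ k) (hk : k ≤ n - 1), ∀ i j : Fin n,
      k ≤ (i : ℕ) → k ≤ (j : ℕ) →
      α (k + 1) i j =
        (α k ⟨k - 1, by omega⟩ ⟨k - 1, by omega⟩ * α k i j -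
            α k i ⟨k - 1, by omega⟩ * α k ⟨k - 1, by omega⟩ j) /
          (if k = 1 then 1 else α (k - 1) ⟨k - 2, by omega⟩ ⟨k - 2, by omega⟩)) :
    ∀ k (hk1 : 1 ≤ k) (hk : k ≤ n), ∀ i j : Fin n,
      k - 1 ≤ (i : ℕ) → k - 1 ≤ (j : ℕ) →
      α k i j = bminor A (k - 1) (by omega) i j := by
  intro k
  induction k using Nat.strong_induction_on with
  | _ k IH =>
    match k with
    | 0 => omega
    | 1 => exact fun _ _ i j _ _ => (hinit i j).trans (bminor_zero A i j).symm
    | m + 2 =>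
      intro _ hk i j hi hj
      have hprev := IH (m + 1) (by omega) (by omega) (by omega)
      have hstep := hrec (m + 1) (by omega) (by omega) i j hi hj
      simp only [Nat.add_sub_cancel, Nat.reduceSubDiff] at hprev hstep hi hj ⊢
      have hdivisor : (if m + 1 = 1 then 1 else α m ⟨m - 1, by omega⟩ ⟨m - 1, by omega⟩) =
          pminor A m (by omega) := by
        rcases m with _ | l
        · exact (pminor_zero A).symm
        · exact (IH (l + 1) (by omega) (by omega) (by omega) _ _ le_rfl le_rfl).trans
            (pminor_succ A l (by omega)).symm
      have hpivot : pminor A m (by omega) ≠ 0 := by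
        rcases m with _ | l
        · exact (pminor_zero A).symm ▸ one_ne_zero
        · exact hp (l + 1) (by omega) (by omega)
      rw [hstep, hdivisor, div_eq_iff hpivot,
        hprev i j (by omega) (by omega), hprev _ _ le_rfl le_rfl, hprev i _ (by omega) le_rfl,
        hprev _ j le_rfl (by omega)]
      exact (bminor_succ_mul_pminor A m (by omega) (isUnit_iff_ne_zero.mpr hpivot) i j).symm
end
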